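/- arXiv:1402.5136 — 3 statements merged into one kernel-verified Lean document; each statement's English description precedes it below -/
import Mathlib

section
/- Let S be a monoid that satisfies the identity σμ: x t1 x y t2 y ≈ x t1 y x t2 y, and suppose the word xy (x, y distinct variables) is not an isoterm for S. Then either there exists a finite set A of almost-linear identities of S such that every identity of S is a consequence of A, or there exists an integer n > 1 such that S satisfies x ≈ x^n and every identity of S is regular. -/
/-- Words over a countably infinite alphabet of variables (identified with ℕ). -/
abbrev Wd := List ℕ

/-- Evaluation of a word in a monoid under an assignment of the variables. -/
def evalWord {M : Type*} [Monoid M] (φ : ℕ → M) (u : Wd) : M := (u.map φ).prod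

/-- A monoid `M` satisfies the identity `e = (u, v)`. -/
def Sat (M : Type*) [Monoid M] (e : Wd × Wd) : Prop :=
  ∀ φ : ℕ → M, evalWord φ e.1 = evalWord φ e.2

/-- The identity `e` is a consequence of the set of identities `Γ`:
every monoid satisfying all identities of `Γ` satisfies `e`. -/
def Consequence (Γ : Set (Wd × Wd)) (e : Wd × Wd) : Prop :=
  ∀ (M : Type) [Monoid M], (∀ f ∈ Γ, Sat M f) → Sat M e

/-- The content of a word: the set of variables occurring in it. -/
def conW (u : Wd) : Set ℕ := {x | x ∈ u}

/-- The set of linear (exactly once occurring) variables of a word. -/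
def linW (u : Wd) : Set ℕ := {x | u.count x = 1}

/-- The set of non-linear (more than once occurring) variables of a word. -/
def nonW (u : Wd) : Set ℕ := {x | 2 ≤ u.count x}

/-- `restrict u X` is the word obtained from `u` by deleting all occurrences of
all variables not in `X`. -/
noncomputable def restrict (u : Wd) (X : Set ℕ) : Wd :=
  u.filter (fun a => @decide (a ∈ X) (Classical.propDecidable _))

/-- The closure of a set of identities under deleting variables. -/
def delta (Γ : Set (Wd × Wd)) : Set (Wd × Wd) :=
  {e | ∃ f ∈ Γ, ∃ X : Set ℕ, e = (restrict f.1 X, restrict f.2 X)}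

/-- A word is almost-linear if it has at most one non-linear variable. -/
def AlmostLinearW (u : Wd) : Prop := ∀ x y, 2 ≤ u.count x → 2 ≤ u.count y → x = y

/-- An identity is almost-linear if both of its sides are almost-linear words. -/
def AlmostLinearId (e : Wd × Wd) : Prop := AlmostLinearW e.1 ∧ AlmostLinearW e.2

/-- An identity is regular if both sides have the same content. -/
def RegularId (e : Wd × Wd) : Prop := conW e.1 = conW e.2

/-- A word `u` is an isoterm for a monoid `M` if the only word `v` with
`M ⊨ u ≈ v` is `u` itself. -/
def Isoterm (M : Type*) [Monoid M] (u : Wd) : Prop := ∀ v : Wd, Sat M (u, v) → v = u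

/-- An identity `u ≈ v` is block-balanced if `u(x, lin u) = v(x, lin u)`
for every variable `x`. -/
def BlockBalanced (e : Wd × Wd) : Prop :=
  ∀ x : ℕ, restrict e.1 ({x} ∪ linW e.1) = restrict e.2 ({x} ∪ linW e.1)

/-- A monoid is finitely based: some finite set of its identities implies all of them. -/
def FinitelyBased (S : Type*) [Monoid S] : Prop :=
  ∃ Γ : Set (Wd × Wd), Γ.Finite ∧ (∀ e ∈ Γ, Sat S e) ∧
    ∀ e : Wd × Wd, Sat S e → Consequence Γ e

/-- Index of the first occurrence of a variable in a word. -/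
def firstIdx (u : Wd) (x : ℕ) : ℕ := u.idxOf x

/-- Index of the last occurrence of a variable in a word. -/
def lastIdx (u : Wd) (x : ℕ) : ℕ := u.length - 1 - u.reverse.idxOf x

/-- σ1 : x y t1 x t2 y ≈ y x t1 x t2 y, with x=0, y=1, t1=2, t2=3. -/
def sigma1 : Wd × Wd := ([0,1,2,0,3,1], [1,0,2,0,3,1])

/-- σμ : x t1 x y t2 y ≈ x t1 y x t2 y, with x=0, y=1, t1=2, t2=3. -/
def sigmaMu : Wd × Wd := ([0,2,0,1,3,1], [0,2,1,0,3,1])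

/-- σ2 : x t1 y t2 x y ≈ x t1 y t2 y x, with x=0, y=1, t1=2, t2=3. -/
def sigma2 : Wd × Wd := ([0,2,1,3,0,1], [0,2,1,3,1,0])

/-!
If `xy` is not an isoterm and all identities of `S` are regular, the only candidate for a
nontrivial identity `xy ≈ v` is `xy ≈ yx` unless `S` satisfies some `x ≈ xⁿ` with `n > 1`.
If some identity `u ≈ v` of `S` is not regular, deleting all variables but one that occurs in
`u` only gives `xᵏ ≈ 1` with `k > 0`, so `S` is a group, and cancelling in the instance
`xxyy ≈ xyxy` of `σμ` makes it commutative. A commutative monoid is defined by `xy ≈ yx`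
together with the identities `xᵃ ≈ xᵇ` it satisfies, and these all follow from the single one
with the least `b`: both sides reduce to the same normal form below `b`.
-/

open List

def HasFiniteAlmostLinearBasis (S : Type*) [Monoid S] : Prop :=
  ∃ A : Set (Wd × Wd), A.Finite ∧ (∀ e ∈ A, AlmostLinearId e ∧ Sat S e) ∧
    ∀ e : Wd × Wd, Sat S e → Consequence A e

section Words

lemma almostLinearW_of_nodup {u : Wd} (hu : u.Nodup) : AlmostLinearW u := by
  intro x _ hx _
  have := nodup_iff_count_le_one.mp hu x
  omega

lemma almostLinearW_replicate (k x : ℕ) : AlmostLinearW (replicate k x) := by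
  intro y z hy hz
  rw [count_replicate] at hy hz
  split_ifs at hy hz with hxy hxz <;> simp_all

end Words

section Monoid

variable {M : Type*} [Monoid M]

lemma evalWord_replicate (φ : ℕ → M) (n x : ℕ) : evalWord φ (replicate n x) = φ x ^ n := by
  simp [evalWord]

lemma evalWord_mulSingle (x : ℕ) (g : M) (u : Wd) :
    evalWord (Pi.mulSingle x g) u = g ^ u.count x := by
  induction u with
  | nil => simp [evalWord]
  | cons a u ih =>
    rw [evalWord, map_cons, prod_cons, ← evalWord, ih, count_cons]
    by_cases h : a = x
    · subst h; simp [pow_succ']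
    · simp [h]

lemma Sat.symm {u v : Wd} (h : Sat M (u, v)) : Sat M (v, u) := fun φ => (h φ).symm

lemma Sat.pow_count_eq {u v : Wd} (h : Sat M (u, v)) (x : ℕ) (g : M) :
    g ^ u.count x = g ^ v.count x := by
  simpa only [evalWord_mulSingle] using h (Pi.mulSingle x g)

lemma sat_replicate_iff {a b : ℕ} :
    Sat M (replicate a 0, replicate b 0) ↔ ∀ g : M, g ^ a = g ^ b :=
  ⟨fun h g => by simpa only [evalWord_replicate] using h fun _ => g,
    fun h φ => by simpa only [evalWord_replicate] using h (φ 0)⟩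

lemma sat_comm_iff : Sat M ([0, 1], [1, 0]) ↔ ∀ a b : M, a * b = b * a :=
  ⟨fun h a b => by simpa [evalWord] using h fun n => if n = 0 then a else b,
    fun h φ => by simpa [evalWord] using h (φ 0) (φ 1)⟩

lemma evalWord_eq_prod_count {M : Type*} [CommMonoid M] (φ : ℕ → M) {u : Wd} {s : Finset ℕ}
    (hs : u.toFinset ⊆ s) : evalWord φ u = ∏ x ∈ s, φ x ^ u.count x := by
  rw [evalWord, Finset.prod_list_map_count]
  refine Finset.prod_subset hs fun x _ hx => ?_
  rw [count_eq_zero.mpr (by simpa using hx), pow_zero]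

lemma sat_of_pow_count_eq (hcomm : ∀ a b : M, a * b = b * a) {u v : Wd}
    (h : ∀ (x : ℕ) (g : M), g ^ u.count x = g ^ v.count x) : Sat M (u, v) := by
  let : CommMonoid M := { ‹Monoid M› with mul_comm := hcomm }
  intro φ
  rw [evalWord_eq_prod_count φ (Finset.subset_union_left (s₂ := v.toFinset)),
    evalWord_eq_prod_count φ (Finset.subset_union_right (s₁ := u.toFinset))]
  exact Finset.prod_congr rfl fun x _ => h x (φ x)

end Monoid

section PowReduce

/-- The least representative of `m` for the congruence on `ℕ` generated by `a ~ a + d`. -/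
def powReduce (a d m : ℕ) : ℕ := if m < a then m else a + (m - a) % d

lemma powReduce_lt {a d : ℕ} (hd : 0 < d) (m : ℕ) : powReduce a d m < a + d := by
  unfold powReduce
  split_ifs
  · omega
  · have := Nat.mod_lt (m - a) hd
    omega

variable {M : Type*} [Monoid M] {g : M} {a d : ℕ}

lemma pow_add_mul_eq_of_pow_eq (h : g ^ a = g ^ (a + d)) {n : ℕ} (hn : a ≤ n) (q : ℕ) :
    g ^ (n + d * q) = g ^ n := by
  induction q with
  | zero => simp
  | succ q ih =>
    calc g ^ (n + d * (q + 1)) = g ^ (n + d * q - a) * g ^ (a + d) := by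
          rw [← pow_add]; congr 1; rw [Nat.mul_succ]; omega
      _ = g ^ (n + d * q) := by
          rw [← h, ← pow_add]; congr 1; omega
      _ = g ^ n := ih

lemma pow_powReduce (h : g ^ a = g ^ (a + d)) (m : ℕ) : g ^ powReduce a d m = g ^ m := by
  unfold powReduce
  split_ifs with hm
  · rfl
  · have hm' : m = a + (m - a) % d + d * ((m - a) / d) := by
      have := Nat.mod_add_div (m - a) d
      omega
    conv_rhs => rw [hm']
    exact (pow_add_mul_eq_of_pow_eq h (Nat.le_add_right _ _) _).symm

lemma powReduce_eq_of_pow_eq {S : Type*} [Monoid S] (hd : 0 < d)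
    (hper : ∀ g : S, g ^ a = g ^ (a + d))
    (hmin : ∀ b c, b < c → c < a + d → ¬ ∀ g : S, g ^ b = g ^ c)
    {m n : ℕ} (h : ∀ g : S, g ^ m = g ^ n) : powReduce a d m = powReduce a d n := by
  have h' : ∀ g : S, g ^ powReduce a d m = g ^ powReduce a d n := fun g => by
    rw [pow_powReduce (hper g), pow_powReduce (hper g), h g]
  rcases lt_trichotomy (powReduce a d m) (powReduce a d n) with hlt | heq | hgt
  · exact absurd h' (hmin _ _ hlt (powReduce_lt hd n))
  · exact heq
  · exact absurd (fun g => (h' g).symm) (hmin _ _ hgt (powReduce_lt hd m))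

end PowReduce

section CommutativeBasis

variable {S : Type*} [Monoid S]

lemma almostLinearId_comm : AlmostLinearId (([0, 1] : Wd), ([1, 0] : Wd)) :=
  ⟨almostLinearW_of_nodup (by decide), almostLinearW_of_nodup (by decide)⟩

lemma hasFiniteAlmostLinearBasis_of_comm_of_pow_injective (hS : ∀ a b : S, a * b = b * a)
    (hinj : ∀ a b, (∀ g : S, g ^ a = g ^ b) → a = b) : HasFiniteAlmostLinearBasis S := by
  refine ⟨{([0, 1], [1, 0])}, Set.finite_singleton _, ?_, ?_⟩
  · rintro e rfl
    exact ⟨almostLinearId_comm, sat_comm_iff.mpr hS⟩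
  · rintro ⟨u, v⟩ he M _ hM
    refine sat_of_pow_count_eq (sat_comm_iff.mp (hM _ rfl)) fun x g => ?_
    rw [hinj _ _ (he.pow_count_eq x)]

lemma hasFiniteAlmostLinearBasis_of_comm_of_pow_eq (hS : ∀ a b : S, a * b = b * a)
    {a d : ℕ} (hd : 0 < d) (hper : ∀ g : S, g ^ a = g ^ (a + d))
    (hmin : ∀ b c, b < c → c < a + d → ¬ ∀ g : S, g ^ b = g ^ c) :
    HasFiniteAlmostLinearBasis S := by
  refine ⟨{([0, 1], [1, 0]), (replicate a 0, replicate (a + d) 0)},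
    (Set.finite_singleton _).insert _, ?_, ?_⟩
  · rintro e (rfl | rfl)
    · exact ⟨almostLinearId_comm, sat_comm_iff.mpr hS⟩
    · exact ⟨⟨almostLinearW_replicate _ _, almostLinearW_replicate _ _⟩,
        sat_replicate_iff.mpr hper⟩
  · rintro ⟨u, v⟩ he M _ hM
    have hperM : ∀ g : M, g ^ a = g ^ (a + d) := sat_replicate_iff.mp (hM _ (by simp))
    refine sat_of_pow_count_eq (sat_comm_iff.mp (hM _ (by simp))) fun x g => ?_
    rw [← pow_powReduce (hperM g), ← pow_powReduce (hperM g) (v.count x),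
      powReduce_eq_of_pow_eq hd hper hmin (he.pow_count_eq x)]

theorem hasFiniteAlmostLinearBasis_of_comm (hS : ∀ a b : S, a * b = b * a) :
    HasFiniteAlmostLinearBasis S := by
  classical
  by_cases hex : ∃ c, ∃ b < c, ∀ g : S, g ^ b = g ^ c
  · obtain ⟨a, hac, hper⟩ := Nat.find_spec hex
    have hmin : ∀ b c, b < c → c < a + (Nat.find hex - a) → ¬ ∀ g : S, g ^ b = g ^ c :=
      fun b c hbc hc h => Nat.find_min hex (by omega) ⟨b, hbc, h⟩
    exact hasFiniteAlmostLinearBasis_of_comm_of_pow_eq hS (d := Nat.find hex - a) (by omega)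
      (by simpa [Nat.add_sub_cancel' hac.le] using hper) hmin
  · refine hasFiniteAlmostLinearBasis_of_comm_of_pow_injective hS fun a b h => ?_
    push Not at hex
    rcases lt_trichotomy a b with hab | rfl | hab
    · obtain ⟨g, hg⟩ := hex b a hab; exact absurd (h g) hg
    · rfl
    · obtain ⟨g, hg⟩ := hex a b hab; exact absurd (h g).symm hg

end CommutativeBasis

section Commutativity

variable {S : Type*} [Monoid S]

lemma comm_of_sigmaMu_of_isUnit (hmu : Sat S sigmaMu) (hu : ∀ g : S, IsUnit g) :
    ∀ a b : S, a * b = b * a := by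
  intro a b
  have h : a * (a * (b * b)) = a * (b * (a * b)) := by
    simpa [sigmaMu, evalWord] using hmu fun n => if n = 0 then a else if n = 1 then b else 1
  have h' : a * b * b = b * a * b := by
    simpa only [mul_assoc] using (hu a).mul_left_cancel h
  exact (hu b).mul_right_cancel h'

lemma exists_pow_eq_one_of_sat_of_mem {u v : Wd} {x : ℕ} (h : Sat S (u, v)) (hu : x ∈ u)
    (hv : x ∉ v) : ∃ k ≠ 0, ∀ g : S, g ^ k = 1 :=
  ⟨u.count x, (count_pos_iff.mpr hu).ne', fun g => by
    simpa [count_eq_zero.mpr hv] using h.pow_count_eq x g⟩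

lemma exists_pow_eq_one_of_not_regularId {e : Wd × Wd} (he : Sat S e) (hreg : ¬ RegularId e) :
    ∃ k ≠ 0, ∀ g : S, g ^ k = 1 := by
  obtain ⟨u, v⟩ := e
  obtain ⟨x, hx⟩ : ∃ x, ¬ (x ∈ u ↔ x ∈ v) := by
    by_contra! h
    exact hreg (Set.ext h)
  by_cases hxu : x ∈ u
  · exact exists_pow_eq_one_of_sat_of_mem he hxu (by tauto)
  · exact exists_pow_eq_one_of_sat_of_mem he.symm (by tauto) hxu

lemma comm_of_regular_of_not_isoterm (hreg : ∀ e : Wd × Wd, Sat S e → RegularId e)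
    (hper : ¬ ∃ n : ℕ, 1 < n ∧ Sat S ([0], replicate n 0)) (hxy : ¬ Isoterm S [0, 1]) :
    ∀ a b : S, a * b = b * a := by
  obtain ⟨v, hv, hne⟩ : ∃ v, Sat S ([0, 1], v) ∧ v ≠ [0, 1] := by simpa [Isoterm] using hxy
  have hmem : ∀ x, x ∈ v ↔ x ∈ [0, 1] := fun x => (Set.ext_iff.mp (hreg _ hv) x).symm
  have hcount : ∀ x, v.count x = [0, 1].count x := by
    intro x
    by_cases hx : x ∈ [0, 1]
    · rw [count_eq_one_of_mem (by decide) hx]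
      have hpos : 0 < v.count x := count_pos_iff.mpr ((hmem x).mpr hx)
      by_contra hne1
      refine hper ⟨v.count x, by omega, sat_replicate_iff (a := 1).mpr fun g => ?_⟩
      simpa [count_eq_one_of_mem (by decide : [0, 1].Nodup) hx] using hv.pow_count_eq x g
    · rw [count_eq_zero.mpr hx, count_eq_zero.mpr (mt (hmem x).mp hx)]
  have hv' : v = [1, 0] := (perm_pair.mp (perm_iff_count.mpr hcount)).resolve_left hne
  exact sat_comm_iff.mp (hv' ▸ hv)

end Commutativity

theorem stmt0 (S : Type*) [Monoid S] (hmu : Sat S sigmaMu)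
    (hxy : ¬ Isoterm S [0, 1]) :
    (∃ A : Set (Wd × Wd), A.Finite ∧ (∀ e ∈ A, AlmostLinearId e ∧ Sat S e) ∧
      (∀ e : Wd × Wd, Sat S e → Consequence A e)) ∨
    (∃ n : ℕ, 1 < n ∧ Sat S ([0], List.replicate n 0) ∧
      (∀ e : Wd × Wd, Sat S e → RegularId e)) := by
  by_cases hreg : ∀ e : Wd × Wd, Sat S e → RegularId e
  · by_cases hper : ∃ n : ℕ, 1 < n ∧ Sat S ([0], List.replicate n 0)
    · obtain ⟨n, hn, hsat⟩ := hper
      exact Or.inr ⟨n, hn, hsat, hreg⟩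
    · exact Or.inl (hasFiniteAlmostLinearBasis_of_comm
        (comm_of_regular_of_not_isoterm hreg hper hxy))
  · push Not at hreg
    obtain ⟨e, he, hnreg⟩ := hreg
    obtain ⟨k, hk, hpow⟩ := exists_pow_eq_one_of_not_regularId he hnreg
    exact Or.inl (hasFiniteAlmostLinearBasis_of_comm
      (comm_of_sigmaMu_of_isUnit hmu fun g => IsUnit.of_pow_eq_one (hpow g) hk))
end

section
/- An identity is a consequence of {σ1, σμ, σ2}^δ if and only if it is block-balanced, where σ1 is x y t1 x t2 y ≈ y x t1 x t2 y, σμ is x t1 x y t2 y ≈ x t1 y x t2 y, and σ2 is x t1 y t2 x y ≈ x t1 y t2 y x. -/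
/-!
Both directions turn on one operation: swapping two adjacent letters `x y` of a word when `x` and
`y` both occur elsewhere. According as those other occurrences lie both after, on either side of,
or both before the pair, such a swap is an instance of `σ1`, `σμ` or `σ2`.

If `u ≈ v` is block-balanced, `u` and `v` have the same linear letters in the same order, and the
blocks between consecutive linear letters are permutations of each other made of non-linear
letters; adjacent swaps inside the blocks therefore turn `u` into `v`.

Conversely, identify words `u` and `v` when `u(X) = v(X)` for every `X` with `u(X)` almost-linear.
This is a congruence on the free monoid. Substitution instances of deletions of the `σ`s swap two
adjacent factors whose letters all occur elsewhere, which cannot change an almost-linear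
restriction, so the quotient satisfies `{σ1, σμ, σ2}^δ`. Every consequence therefore holds in the
quotient: its sides agree on every almost-linear restriction, in particular on `{x} ∪ lin(u)`.
-/

namespace List

variable {α : Type*}

lemma append_comm_of_forall_mem_eq {a b : List α} (h : ∀ y ∈ a ++ b, ∀ z ∈ a ++ b, y = z) :
    a ++ b = b ++ a := by
  by_cases hab : a ++ b = []
  · simp_all
  obtain ⟨x, hx⟩ := exists_mem_of_ne_nil _ hab
  have hrep : ∀ c, (∀ y ∈ c, y ∈ a ++ b) → c = replicate c.length x :=
    fun c hc => eq_replicate_iff.2 ⟨rfl, fun y hy => h y (hc y hy) x hx⟩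
  rw [hrep a (fun y => mem_append_left b), hrep b (fun y => mem_append_right a),
    ← replicate_add, ← replicate_add, Nat.add_comm]

lemma append_cons_cancel_of_notMem {x₁ x₂ z₁ z₂ : List α} {a : α} (h₁ : a ∉ x₁) (h₂ : a ∉ x₂)
    (h : x₁ ++ a :: z₁ = x₂ ++ a :: z₂) : x₁ = x₂ ∧ z₁ = z₂ := by
  induction x₁ generalizing x₂ with
  | nil =>
    cases x₂ with
    | nil => simpa using h
    | cons c x₂ =>
      simp only [nil_append, cons_append, cons.injEq] at h
      exact absurd (h.1 ▸ mem_cons_self) h₂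
  | cons b x₁ ih =>
    cases x₂ with
    | nil =>
      simp only [nil_append, cons_append, cons.injEq] at h
      exact absurd (h.1 ▸ mem_cons_self) h₁
    | cons c x₂ =>
      simp only [cons_append, cons.injEq, mem_cons, not_or] at h h₁ h₂
      exact ⟨by rw [h.1, (ih h₁.2 h₂.2 h.2).1], (ih h₁.2 h₂.2 h.2).2⟩

lemma pair_sublist_or_of_mem {l : List α} {x y : α} (hx : x ∈ l) (hy : y ∈ l) (hxy : x ≠ y) :
    [x, y].Sublist l ∨ [y, x].Sublist l := by
  induction l with
  | nil => simp at hx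
  | cons a l ih =>
    rcases mem_cons.1 hx with rfl | hxl
    · exact .inl ((singleton_sublist.2 ((mem_cons.1 hy).resolve_left hxy.symm)).cons_cons x)
    rcases mem_cons.1 hy with rfl | hyl
    · exact .inr ((singleton_sublist.2 hxl).cons_cons y)
    exact (ih hxl hyl).imp (.cons a) (.cons a)

lemma eq_append_cons_append_cons_of_pair_sublist {l : List α} {x y : α}
    (h : [x, y].Sublist l) : ∃ a b c, l = a ++ x :: b ++ y :: c := by
  obtain ⟨r₁, r₂, rfl, hx, hy⟩ := cons_sublist_iff.1 h
  obtain ⟨a, b, rfl⟩ := append_of_mem hx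
  obtain ⟨c, d, rfl⟩ := append_of_mem (singleton_sublist.1 hy)
  exact ⟨a, b ++ c, d, by simp⟩

lemma count_le_count_flatMap {β : Type*} [BEq β] (g : α → List β) {w : List α} {x : α}
    (hx : x ∈ w) (z : β) : (g x).count z ≤ (w.flatMap g).count z :=
  (sublist_flatten_of_mem (mem_map_of_mem hx)).count_le z

end List

lemma mem_restrict {u : Wd} {X : Set ℕ} {z : ℕ} : z ∈ restrict u X ↔ z ∈ u ∧ z ∈ X := by
  simp [restrict]

@[simp] lemma restrict_append (u v : Wd) (X : Set ℕ) :
    restrict (u ++ v) X = restrict u X ++ restrict v X :=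
  List.filter_append ..

lemma restrict_cons_of_mem {a : ℕ} (u : Wd) {X : Set ℕ} (ha : a ∈ X) :
    restrict (a :: u) X = a :: restrict u X := by
  simp [restrict, ha]

lemma restrict_univ (u : Wd) : restrict u Set.univ = u := by
  simp [restrict]

lemma restrict_restrict_of_subset (u : Wd) {A B : Set ℕ} (h : B ⊆ A) :
    restrict (restrict u A) B = restrict u B := by
  simp only [restrict, List.filter_filter]
  congr 1
  funext a
  by_cases hB : a ∈ B
  · simp [hB, h hB]
  · simp [hB]

lemma count_restrict_of_mem (u : Wd) {X : Set ℕ} {x : ℕ} (hx : x ∈ X) :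
    (restrict u X).count x = u.count x :=
  List.count_filter (by simpa using hx)

lemma two_le_count_restrict {u : Wd} {X : Set ℕ} {z : ℕ} :
    2 ≤ (restrict u X).count z ↔ z ∈ X ∧ 2 ≤ u.count z := by
  by_cases hz : z ∈ X
  · simp [count_restrict_of_mem u hz, hz]
  · have : z ∉ restrict u X := fun h => hz (mem_restrict.1 h).2
    simp [List.count_eq_zero_of_not_mem this, hz]

open Classical in
lemma flatMap_restrict (g : ℕ → Wd) (u : Wd) (X : Set ℕ) :
    (restrict u X).flatMap g = u.flatMap (fun n => if n ∈ X then g n else []) := by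
  induction u with
  | nil => rfl
  | cons a u ih => by_cases ha : a ∈ X <;> simp_all [restrict]

lemma restrict_append_cons_cancel {B B' u v : Wd} {l : ℕ} {X : Set ℕ} (hB : l ∉ B) (hB' : l ∉ B')
    (hl : l ∈ X) (h : restrict (B ++ l :: u) X = restrict (B' ++ l :: v) X) :
    restrict B X = restrict B' X ∧ restrict u X = restrict v X := by
  rw [restrict_append, restrict_append, restrict_cons_of_mem _ hl, restrict_cons_of_mem _ hl] at h
  exact List.append_cons_cancel_of_notMem (fun h => hB (mem_restrict.1 h).1)
    (fun h => hB' (mem_restrict.1 h).1) h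

lemma perm_of_forall_restrict_eq {u v : Wd} {L : Set ℕ}
    (h : ∀ x, restrict u ({x} ∪ L) = restrict v ({x} ∪ L)) : u.Perm v :=
  List.perm_iff_count.2 fun z => by
    have hz : z ∈ {z} ∪ L := Set.mem_union_left L rfl
    rw [← count_restrict_of_mem u hz, h z, count_restrict_of_mem v hz]

@[simp] lemma evalWord_cons {M : Type*} [Monoid M] (φ : ℕ → M) (a : ℕ) (u : Wd) :
    evalWord φ (a :: u) = φ a * evalWord φ u := by
  simp [evalWord]

@[simp] lemma evalWord_append {M : Type*} [Monoid M] (φ : ℕ → M) (u v : Wd) :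
    evalWord φ (u ++ v) = evalWord φ u * evalWord φ v := by
  simp [evalWord]

lemma AlmostLinearW.of_append {u v : Wd} (h : AlmostLinearW (u ++ v)) :
    AlmostLinearW u ∧ AlmostLinearW v := by
  constructor <;> intro x y hx hy <;> apply h <;> simp only [List.count_append] <;> omega

def AlmostLinearAgree (u v : Wd) : Prop :=
  ∀ X, AlmostLinearW (restrict u X) → restrict u X = restrict v X

namespace AlmostLinearAgree

lemma count_eq {u v : Wd} (h : AlmostLinearAgree u v) (z : ℕ) : u.count z = v.count z := by
  have hz : z ∈ ({z} : Set ℕ) := rfl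
  have hlin : AlmostLinearW (restrict u {z}) := fun x y hx hy => by
    rw [two_le_count_restrict] at hx hy
    exact hx.1.trans hy.1.symm
  rw [← count_restrict_of_mem u hz, h _ hlin, count_restrict_of_mem v hz]

lemma refl (u : Wd) : AlmostLinearAgree u u := fun _ _ => rfl

lemma symm {u v : Wd} (h : AlmostLinearAgree u v) : AlmostLinearAgree v u := by
  intro X hv
  have hu : AlmostLinearW (restrict u X) := by
    intro x y hx hy
    simp only [two_le_count_restrict, h.count_eq] at hx hy
    exact hv x y (two_le_count_restrict.2 hx) (two_le_count_restrict.2 hy)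
  exact (h X hu).symm

lemma trans {u v w : Wd} (h : AlmostLinearAgree u v) (h' : AlmostLinearAgree v w) :
    AlmostLinearAgree u w := fun X hu => by
  have huv := h X hu
  rw [huv] at hu ⊢
  exact h' X hu

lemma append {u v u' v' : Wd} (h : AlmostLinearAgree u v) (h' : AlmostLinearAgree u' v') :
    AlmostLinearAgree (u ++ u') (v ++ v') := by
  intro X hX
  rw [restrict_append] at hX ⊢
  rw [h X hX.of_append.1, h' X hX.of_append.2, restrict_append]

lemma swap {p a b q : Wd} (h : ∀ z ∈ a ++ b, 2 ≤ (p ++ a ++ b ++ q).count z) :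
    AlmostLinearAgree (p ++ a ++ b ++ q) (p ++ b ++ a ++ q) := by
  intro X hX
  have hab : ∀ z ∈ restrict a X ++ restrict b X, 2 ≤ (restrict (p ++ a ++ b ++ q) X).count z := by
    intro z hz
    simp only [List.mem_append, mem_restrict] at hz
    refine two_le_count_restrict.2 ⟨?_, h z ?_⟩ <;> grind
  simp only [restrict_append, List.append_assoc]
  rw [← List.append_assoc (restrict a X), List.append_comm_of_forall_mem_eq
    (fun y hy z hz => hX y z (hab y hy) (hab z hz)), List.append_assoc]

end AlmostLinearAgree

lemma blockBalanced_of_almostLinearAgree {u v : Wd} (h : AlmostLinearAgree u v) :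
    BlockBalanced (u, v) := by
  intro x
  apply h
  have hnonlin : ∀ {y}, 2 ≤ (restrict u ({x} ∪ linW u)).count y → y = x := by
    intro y hy
    obtain ⟨hyx | hylin, hcount⟩ := two_le_count_restrict.1 hy
    · exact hyx
    · exact absurd (show u.count y = 1 from hylin) (by omega)
  exact fun y z hy hz => (hnonlin hy).trans (hnonlin hz).symm

def almostLinearCon : Con (FreeMonoid ℕ) where
  r u v := AlmostLinearAgree u.toList v.toList
  iseqv := ⟨fun _ => .refl _, .symm, .trans⟩
  mul' h h' := h.append h'

lemma evalWord_ofList_quotient (c : Con (FreeMonoid ℕ)) (g : ℕ → Wd) (w : Wd) :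
    evalWord (fun n => (FreeMonoid.ofList (g n) : c.Quotient)) w =
      (FreeMonoid.ofList (w.flatMap g) : c.Quotient) := by
  induction w with
  | nil => rfl
  | cons a w ih =>
    simp only [evalWord, List.map_cons, List.prod_cons] at ih ⊢
    rw [ih, List.flatMap_cons, FreeMonoid.ofList_append, Con.coe_mul]

lemma almostLinearAgree_flatMap_swap {P Q : Wd} {x y : ℕ} (hx : x ∈ P ++ Q) (hy : y ∈ P ++ Q)
    (g : ℕ → Wd) :
    AlmostLinearAgree ((P ++ x :: y :: Q).flatMap g) ((P ++ y :: x :: Q).flatMap g) := by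
  simp only [List.flatMap_append, List.flatMap_cons, ← List.append_assoc]
  apply AlmostLinearAgree.swap
  intro z hz
  have hPQ := List.flatMap_append (f := g) (xs := P) (ys := Q) ▸ List.count_append (a := z)
  have := List.count_le_count_flatMap g hx z
  have := List.count_le_count_flatMap g hy z
  have := List.count_pos_iff.2 hz
  simp only [List.count_append] at *
  omega

lemma eq_swap_of_mem_sigmas {f : Wd × Wd} (hf : f ∈ ({sigma1, sigmaMu, sigma2} : Set (Wd × Wd))) :
    ∃ P Q : Wd, ∃ x y, x ∈ P ++ Q ∧ y ∈ P ++ Q ∧ f = (P ++ x :: y :: Q, P ++ y :: x :: Q) := by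
  rcases hf with rfl | rfl | rfl
  exacts [⟨[], [2, 0, 3, 1], 0, 1, by decide, by decide, rfl⟩,
    ⟨[0, 2], [3, 1], 0, 1, by decide, by decide, rfl⟩,
    ⟨[0, 2, 1, 3], [], 0, 1, by decide, by decide, rfl⟩]

lemma sat_delta_almostLinearCon :
    ∀ f ∈ delta {sigma1, sigmaMu, sigma2}, Sat almostLinearCon.Quotient f := by
  rintro _ ⟨f, hf, X, rfl⟩ ψ
  obtain ⟨P, Q, x, y, hx, hy, rfl⟩ := eq_swap_of_mem_sigmas hf
  obtain ⟨g, rfl⟩ : ∃ g : ℕ → Wd,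
      ψ = fun n => ((FreeMonoid.ofList (g n) : FreeMonoid ℕ) : almostLinearCon.Quotient) :=
    ⟨fun n => (Quotient.out (ψ n)).toList, funext fun n => (Quotient.out_eq (ψ n)).symm⟩
  simp only [evalWord_ofList_quotient, flatMap_restrict]
  exact Con.eq _ |>.2 (almostLinearAgree_flatMap_swap hx hy _)

lemma blockBalanced_of_consequence {e : Wd × Wd}
    (h : Consequence (delta {sigma1, sigmaMu, sigma2}) e) : BlockBalanced e := by
  have := h _ sat_delta_almostLinearCon
    fun n => ((FreeMonoid.ofList [n] : FreeMonoid ℕ) : almostLinearCon.Quotient)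
  simp only [evalWord_ofList_quotient, List.flatMap_singleton', Con.eq] at this
  exact blockBalanced_of_almostLinearAgree this

section Rearrangement

variable {M : Type*} [Monoid M]

lemma Sat.sigma1_mul (h : Sat M sigma1) (x y t s : M) :
    x * y * t * x * s * y = y * x * t * x * s * y := by
  simpa [sigma1, evalWord, mul_assoc] using h fun n => [x, y, t, s].getD n 1

lemma Sat.sigmaMu_mul (h : Sat M sigmaMu) (x y t s : M) :
    x * t * x * y * s * y = x * t * y * x * s * y := by
  simpa [sigmaMu, evalWord, mul_assoc] using h fun n => [x, y, t, s].getD n 1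

lemma Sat.sigma2_mul (h : Sat M sigma2) (x y t s : M) :
    x * t * y * s * x * y = x * t * y * s * y * x := by
  simpa [sigma2, evalWord, mul_assoc] using h fun n => [x, y, t, s].getD n 1

lemma evalWord_swap_of_sublist (h1 : Sat M sigma1) (hμ : Sat M sigmaMu) (h2 : Sat M sigma2)
    (φ : ℕ → M) {p q : Wd} {x y : ℕ} (h : [x, y].Sublist (p ++ q)) :
    evalWord φ (p ++ x :: y :: q) = evalWord φ (p ++ y :: x :: q) := by
  obtain ⟨l₁, l₂, hl, hp, hq⟩ := List.sublist_append_iff.1 h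
  rcases l₁ with _ | ⟨a, _ | ⟨b, _ | ⟨c, l₁⟩⟩⟩ <;>
    simp only [List.nil_append, List.cons_append, List.cons.injEq, List.nil_eq, reduceCtorEq,
      and_false] at hl
  · obtain ⟨a, b, c, rfl⟩ := List.eq_append_cons_append_cons_of_pair_sublist (hl ▸ hq)
    have := congrArg (evalWord φ p * · * evalWord φ c)
      (h1.sigma1_mul (φ x) (φ y) (evalWord φ a) (evalWord φ b))
    simpa [mul_assoc] using this
  · obtain ⟨rfl, rfl⟩ := hl
    obtain ⟨p₁, p₂, rfl⟩ := List.append_of_mem (List.singleton_sublist.1 hp)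
    obtain ⟨q₁, q₂, rfl⟩ := List.append_of_mem (List.singleton_sublist.1 hq)
    have := congrArg (evalWord φ p₁ * · * evalWord φ q₂)
      (hμ.sigmaMu_mul (φ x) (φ y) (evalWord φ p₂) (evalWord φ q₁))
    simpa [mul_assoc] using this
  · obtain ⟨rfl, rfl, rfl⟩ := hl
    obtain ⟨p₁, p₂, p₃, rfl⟩ := List.eq_append_cons_append_cons_of_pair_sublist hp
    have := congrArg (evalWord φ p₁ * · * evalWord φ q)
      (h2.sigma2_mul (φ x) (φ y) (evalWord φ p₂) (evalWord φ p₃))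
    simpa [mul_assoc] using this

lemma evalWord_swap (h1 : Sat M sigma1) (hμ : Sat M sigmaMu) (h2 : Sat M sigma2) (φ : ℕ → M)
    {p q : Wd} {x y : ℕ} (hx : 2 ≤ (p ++ x :: y :: q).count x)
    (hy : 2 ≤ (p ++ x :: y :: q).count y) :
    evalWord φ (p ++ x :: y :: q) = evalWord φ (p ++ y :: x :: q) := by
  by_cases hxy : x = y
  · rw [hxy]
  have hx' : x ∈ p ++ q := by
    rw [List.count_append, List.count_cons_self, List.count_cons_of_ne (Ne.symm hxy)] at hx
    rw [← List.count_pos_iff, List.count_append]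
    omega
  have hy' : y ∈ p ++ q := by
    rw [List.count_append, List.count_cons_of_ne hxy, List.count_cons_self] at hy
    rw [← List.count_pos_iff, List.count_append]
    omega
  rcases List.pair_sublist_or_of_mem hx' hy' hxy with h | h
  · exact evalWord_swap_of_sublist h1 hμ h2 φ h
  · exact (evalWord_swap_of_sublist h1 hμ h2 φ h).symm

lemma evalWord_append_perm_append (h1 : Sat M sigma1) (hμ : Sat M sigmaMu) (h2 : Sat M sigma2)
    (φ : ℕ → M) {B B' : Wd} (hB : B.Perm B') {P Q : Wd}
    (h : ∀ a ∈ B, 2 ≤ (P ++ B ++ Q).count a) :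
    evalWord φ (P ++ B ++ Q) = evalWord φ (P ++ B' ++ Q) := by
  induction hB generalizing P with
  | nil => rfl
  | cons a _ ih =>
    simpa using ih (P := P ++ [a]) fun b hb => by simpa using h b (List.mem_cons_of_mem a hb)
  | swap a b l =>
    simpa using evalWord_swap h1 hμ h2 φ (p := P) (q := l ++ Q)
      (by simpa using h b (by simp)) (by simpa using h a (by simp))
  | trans h₁₂ _ ih₁₂ ih₂₃ =>
    have hcount : ∀ a, (P ++ _ ++ Q).count a = (P ++ _ ++ Q).count a := fun a =>
      ((h₁₂.append_left P).append_right Q).count_eq a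
    rw [ih₁₂ h, ih₂₃ fun a ha => hcount a ▸ h a (h₁₂.mem_iff.2 ha)]

lemma evalWord_append_eq_of_restrict_eq (h1 : Sat M sigma1) (hμ : Sat M sigmaMu)
    (h2 : Sat M sigma2) (φ : ℕ → M) (L : Set ℕ) (P u v : Wd)
    (huv : ∀ x, restrict u ({x} ∪ L) = restrict v ({x} ∪ L))
    (hP : ∀ x ∈ u, x ∉ L → 2 ≤ (P ++ u).count x) :
    evalWord φ (P ++ u) = evalWord φ (P ++ v) := by
  have hL : restrict u L = restrict v L := by
    have hsub : L ⊆ {0} ∪ L := Set.subset_union_right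
    rw [← restrict_restrict_of_subset u hsub, huv, restrict_restrict_of_subset v hsub]
  cases hr : restrict u L with
  | nil =>
    simpa using evalWord_append_perm_append h1 hμ h2 φ (perm_of_forall_restrict_eq huv) (Q := [])
      fun x hx => by
        simpa using hP x hx (by simpa [restrict] using List.filter_eq_nil_iff.1 hr x hx)
  | cons l r =>
    obtain ⟨B, u₁, rfl, hB, hl, -⟩ := List.filter_eq_cons_iff.1 hr
    obtain ⟨B', v₁, rfl, hB', -, -⟩ := List.filter_eq_cons_iff.1 (hL ▸ hr)
    have hlL : l ∈ L := by simpa using hl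
    have hlB : l ∉ B := fun h => by simpa [hlL] using hB l h
    have hlB' : l ∉ B' := fun h => by simpa [hlL] using hB' l h
    have hsplit := fun x => restrict_append_cons_cancel hlB hlB' (Set.mem_union_right _ hlL) (huv x)
    have hperm : B.Perm B' := perm_of_forall_restrict_eq fun x => (hsplit x).1
    have hPu : (P ++ B' ++ [l] ++ u₁).Perm (P ++ (B ++ l :: u₁)) := by
      simpa using (hperm.symm.append_right (l :: u₁)).append_left P
    calc evalWord φ (P ++ (B ++ l :: u₁)) = evalWord φ (P ++ B ++ l :: u₁) := by
          rw [List.append_assoc]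
      _ = evalWord φ (P ++ B' ++ l :: u₁) :=
          evalWord_append_perm_append h1 hμ h2 φ hperm fun a ha => by
            simpa using hP a (by simp [ha]) (by simpa using hB a ha)
      _ = evalWord φ ((P ++ B' ++ [l]) ++ u₁) := by simp
      _ = evalWord φ ((P ++ B' ++ [l]) ++ v₁) :=
          evalWord_append_eq_of_restrict_eq h1 hμ h2 φ L _ u₁ v₁ (fun x => (hsplit x).2)
            fun x hx hxL => hPu.count_eq x ▸ hP x (by simp [hx]) hxL
      _ = evalWord φ (P ++ (B' ++ l :: v₁)) := by simp
termination_by u.length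
decreasing_by subst_vars; simp only [List.length_append, List.length_cons]; omega

end Rearrangement

lemma consequence_of_blockBalanced {e : Wd × Wd} (h : BlockBalanced e) :
    Consequence (delta {sigma1, sigmaMu, sigma2}) e := by
  intro M _ hM φ
  have hσ : ∀ f ∈ ({sigma1, sigmaMu, sigma2} : Set (Wd × Wd)), Sat M f := fun f hf =>
    hM f ⟨f, hf, Set.univ, by rw [restrict_univ, restrict_univ]⟩
  have hnonlin : ∀ x ∈ e.1, x ∉ linW e.1 → 2 ≤ ([] ++ e.1).count x := fun x hx hlin => by
    have := List.count_pos_iff.2 hx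
    have : e.1.count x ≠ 1 := hlin
    rw [List.nil_append]
    omega
  simpa using evalWord_append_eq_of_restrict_eq (hσ _ (by simp)) (hσ _ (by simp))
    (hσ _ (by simp)) φ (linW e.1) [] e.1 e.2 h hnonlin

theorem stmt4 (e : Wd × Wd) :
    Consequence (delta {sigma1, sigmaMu, sigma2}) e ↔ BlockBalanced e :=
  ⟨blockBalanced_of_consequence, consequence_of_blockBalanced⟩
end

section
/- An identity u ≈ v belongs to J_2, i.e., the words u and v have the same set of scattered subwords of length at most 2, if and only if u ≈ v satisfies property P_{1,2}. -/
/-- Property P₁,₂: same linear and non-linear variables, and for all variables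
`x, y` of the content, the first occurrence of `x` precedes the last occurrence
of `y` on one side iff it does on the other side. -/
def P12 (e : Wd × Wd) : Prop :=
  linW e.1 = linW e.2 ∧ nonW e.1 = nonW e.2 ∧
  ∀ x ∈ conW e.1, ∀ y ∈ conW e.1,
    (firstIdx e.1 x < lastIdx e.1 y ↔ firstIdx e.2 x < lastIdx e.2 y)

/-- `Jm m`: the set of identities whose two sides have the same set of
scattered subwords (sublists) of length at most `m`. -/
def Jm (m : ℕ) : Set (Wd × Wd) :=
  {e | ∀ p : Wd, p.length ≤ m → (p.Sublist e.1 ↔ p.Sublist e.2)}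


/-!
A scattered subword of length at most 2 is `[]`, `[x]`, `[x, x]` or `[x, y]`. The words `[x]`
record the content, the words `[x, x]` the non-linear variables, and together these determine the
linear ones. Finally `[x, y]` is a scattered subword of `u` exactly when some prefix of `u`
contains `x` and the complementary suffix contains `y`, i.e. when the first occurrence of `x`
precedes the last occurrence of `y`.
-/

namespace List

variable {α : Type*}

theorem pair_sublist_iff_exists_take_drop {x y : α} {l : List α} :
    [x, y] <+ l ↔ ∃ n ≤ l.length, x ∈ l.take n ∧ y ∈ l.drop n := by
  rw [cons_sublist_iff]
  constructor
  · rintro ⟨r₁, r₂, rfl, hx, hy⟩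
    refine ⟨r₁.length, by simp, ?_, ?_⟩
    · simpa using hx
    · simpa using singleton_sublist.1 hy
  · rintro ⟨n, -, hx, hy⟩
    exact ⟨l.take n, l.drop n, (take_append_drop n l).symm, hx, singleton_sublist.2 hy⟩

theorem mem_drop_iff_idxOf_reverse_lt [BEq α] [LawfulBEq α] {y : α} {l : List α} {n : ℕ}
    (hy : y ∈ l) (hn : n ≤ l.length) : y ∈ l.drop n ↔ l.reverse.idxOf y < l.length - n := by
  have hrev : l.reverse.take (l.length - n) = (l.drop n).reverse := by
    rw [take_reverse, Nat.sub_sub_self hn]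
  rw [← mem_reverse, ← hrev, mem_take_iff_idxOf_lt (mem_reverse.2 hy)]

end List

open List

theorem pair_sublist_iff_firstIdx_lt_lastIdx {u : Wd} {x y : ℕ} (hx : x ∈ u) (hy : y ∈ u) :
    [x, y] <+ u ↔ firstIdx u x < lastIdx u y := by
  have hy' : u.reverse.idxOf y < u.length := by
    simpa using idxOf_lt_length_iff.2 (mem_reverse.2 hy)
  rw [pair_sublist_iff_exists_take_drop, firstIdx, lastIdx]
  constructor
  · rintro ⟨n, hn, hxn, hyn⟩
    rw [mem_take_iff_idxOf_lt hx] at hxn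
    rw [mem_drop_iff_idxOf_reverse_lt hy hn] at hyn
    omega
  · intro h
    refine ⟨u.idxOf x + 1, by omega, ?_, ?_⟩
    · exact (mem_take_iff_idxOf_lt hx).2 (Nat.lt_succ_self _)
    · exact (mem_drop_iff_idxOf_reverse_lt hy (by omega)).2 (by omega)

theorem mem_nonW_iff_pair_sublist {u : Wd} {x : ℕ} : x ∈ nonW u ↔ [x, x] <+ u :=
  (replicate_sublist_iff (n := 2)).symm

theorem linW_eq_and_nonW_eq_iff {u v : Wd} :
    linW u = linW v ∧ nonW u = nonW v ↔ (∀ x, x ∈ u ↔ x ∈ v) ∧ nonW u = nonW v := by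
  simp only [linW, nonW, Set.ext_iff, Set.mem_ofPred_eq, ← count_pos_iff]
  constructor
  · rintro ⟨hlin, hnon⟩
    exact ⟨fun x => by have := hlin x; have := hnon x; omega, hnon⟩
  · rintro ⟨hcon, hnon⟩
    exact ⟨fun x => by have := hcon x; have := hnon x; omega, hnon⟩

theorem mem_Jm_two_iff {u v : Wd} :
    (u, v) ∈ Jm 2 ↔ (∀ x, x ∈ u ↔ x ∈ v) ∧ ∀ x y, [x, y] <+ u ↔ [x, y] <+ v := by
  constructor
  · intro h
    exact ⟨fun x => by simpa using h [x] (by simp), fun x y => h [x, y] (by simp)⟩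
  · rintro ⟨hcon, hpair⟩ p hp
    match p, hp with
    | [], _ => simp
    | [x], _ => simpa using hcon x
    | [x, y], _ => exact hpair x y

theorem stmt8 (u v : Wd) : (u, v) ∈ Jm 2 ↔ P12 (u, v) := by
  rw [mem_Jm_two_iff, P12, ← and_assoc, linW_eq_and_nonW_eq_iff]
  dsimp only [conW, Set.mem_ofPred_eq]
  constructor
  · rintro ⟨hcon, hpair⟩
    refine ⟨⟨hcon, Set.ext fun x => ?_⟩, fun x hx y hy => ?_⟩
    · simp only [mem_nonW_iff_pair_sublist, hpair]
    · rw [← pair_sublist_iff_firstIdx_lt_lastIdx hx hy,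
        ← pair_sublist_iff_firstIdx_lt_lastIdx ((hcon x).1 hx) ((hcon y).1 hy)]
      exact hpair x y
  · rintro ⟨⟨hcon, -⟩, hidx⟩
    refine ⟨hcon, fun x y => ?_⟩
    by_cases hxy : x ∈ u ∧ y ∈ u
    · obtain ⟨hx, hy⟩ := hxy
      rw [pair_sublist_iff_firstIdx_lt_lastIdx hx hy,
        pair_sublist_iff_firstIdx_lt_lastIdx ((hcon x).1 hx) ((hcon y).1 hy)]
      exact hidx x hx y hy
    · have mem_of_pair {w : Wd} (h : [x, y] <+ w) : x ∈ w ∧ y ∈ w :=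
        ⟨h.subset (by simp), h.subset (by simp)⟩
      refine iff_of_false (fun h => hxy (mem_of_pair h)) fun h => hxy ?_
      simpa only [hcon] using mem_of_pair h
end
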